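/- Let $G = \begin{bmatrix} G_{11} & G_{12} \\ G_{21} & G_{22} \end{bmatrix}$ be a complex block matrix with square diagonal blocks, $\|G\| \le \beta$ for some $\beta > 1$, and suppose $G_{11}$ is nilpotent with $G_{11}^\kappa = 0$. Then $K = G_{22} + G_{21}(I - G_{11})^{-1} G_{12}$ satisfies $\|K\| \le \beta \sqrt{(\beta^2 - 1)(1 + \beta + \cdots + \beta^{\kappa-1})^2 + 1}$. -/

import Mathlib

/-!
Put `x = (1 - G₁₁)⁻¹ G₁₂ u`. Then `G` maps `(x, u)` to `(x, K u)`, so `‖G‖ ≤ β` gives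
`‖x‖² + ‖K u‖² ≤ β² (‖x‖² + ‖u‖²)`, i.e. `‖K u‖² ≤ (β² - 1) ‖x‖² + β² ‖u‖²`. As blocks of `G`,
`G₁₁` and `G₁₂` have norm at most `β`, and nilpotency makes `(1 - G₁₁)⁻¹` the finite geometric
sum `∑_{i<κ} G₁₁ⁱ`, of norm at most `∑_{i<κ} βⁱ`; hence `‖x‖ ≤ β (∑_{i<κ} βⁱ) ‖u‖`.
-/

open scoped Matrix.Norms.L2Operator
open Matrix WithLp Finset

variable {𝕜 : Type*} [RCLike 𝕜]

theorem EuclideanSpace.norm_sq_toLp_sumElim {m n : Type*} [Fintype m] [Fintype n]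
    (v : m → 𝕜) (u : n → 𝕜) :
    ‖toLp 2 (Sum.elim v u)‖ ^ 2 = ‖toLp 2 v‖ ^ 2 + ‖toLp 2 u‖ ^ 2 := by
  simp only [EuclideanSpace.norm_sq_eq, Fintype.sum_sum_type, Sum.elim_inl, Sum.elim_inr]

theorem norm_pow_le_of_norm_one_le {R : Type*} [SeminormedRing R] (h1 : ‖(1 : R)‖ ≤ 1)
    (a : R) : ∀ i : ℕ, ‖a ^ i‖ ≤ ‖a‖ ^ i
  | 0 => by simpa using h1
  | i + 1 => norm_pow_le' a i.succ_pos

theorem norm_geom_sum_le_of_norm_le {R : Type*} [SeminormedRing R] (h1 : ‖(1 : R)‖ ≤ 1)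
    {a : R} {β : ℝ} (ha : ‖a‖ ≤ β) (κ : ℕ) :
    ‖∑ i ∈ range κ, a ^ i‖ ≤ ∑ i ∈ range κ, β ^ i :=
  (norm_sum_le _ _).trans <| sum_le_sum fun i _ =>
    (norm_pow_le_of_norm_one_le h1 a i).trans (pow_le_pow_left₀ (norm_nonneg a) ha i)

theorem one_sub_mul_geom_sum_of_pow_eq_zero {R : Type*} [Ring R] {a : R} {κ : ℕ}
    (ha : a ^ κ = 0) : (1 - a) * ∑ i ∈ range κ, a ^ i = 1 := by
  rw [mul_neg_geom_sum, ha, sub_zero]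

namespace Matrix

variable {l m n o : Type*} [Fintype l] [Fintype m] [Fintype n] [Fintype o]

theorem l2_opNorm_le_of_mulVec [DecidableEq n] {A : Matrix m n 𝕜} {c : ℝ} (hc : 0 ≤ c)
    (h : ∀ x : n → 𝕜, ‖toLp 2 (A *ᵥ x)‖ ≤ c * ‖toLp 2 x‖) : ‖A‖ ≤ c :=
  ContinuousLinearMap.opNorm_le_bound _ hc fun x => h x

-- Not `norm_one`: for empty `n` the norm of `1` is `0`, so there is no `NormOneClass` instance.
theorem l2_opNorm_one_le [DecidableEq n] : ‖(1 : Matrix n n 𝕜)‖ ≤ 1 :=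
  l2_opNorm_le_of_mulVec zero_le_one fun x => by rw [one_mulVec, one_mul]

theorem norm_sq_fromBlocks_mulVec_le [DecidableEq l] [DecidableEq m]
    (A : Matrix n l 𝕜) (B : Matrix n m 𝕜) (C : Matrix o l 𝕜) (D : Matrix o m 𝕜)
    (x : l → 𝕜) (y : m → 𝕜) :
    ‖toLp 2 (A *ᵥ x + B *ᵥ y)‖ ^ 2 + ‖toLp 2 (C *ᵥ x + D *ᵥ y)‖ ^ 2 ≤
      ‖fromBlocks A B C D‖ ^ 2 * (‖toLp 2 x‖ ^ 2 + ‖toLp 2 y‖ ^ 2) := by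
  have h := (fromBlocks A B C D).l2_opNorm_mulVec (toLp 2 (Sum.elim x y))
  rw [fromBlocks_mulVec] at h
  simp only [Sum.elim_comp_inl, Sum.elim_comp_inr] at h
  rw [← EuclideanSpace.norm_sq_toLp_sumElim, ← EuclideanSpace.norm_sq_toLp_sumElim, ← mul_pow]
  exact pow_le_pow_left₀ (norm_nonneg _) h 2

theorem l2_opNorm_le_l2_opNorm_fromBlocks₁₁ [DecidableEq l] [DecidableEq m]
    (A : Matrix n l 𝕜) (B : Matrix n m 𝕜) (C : Matrix o l 𝕜) (D : Matrix o m 𝕜) :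
    ‖A‖ ≤ ‖fromBlocks A B C D‖ := by
  refine l2_opNorm_le_of_mulVec (norm_nonneg _) fun x => ?_
  have h := norm_sq_fromBlocks_mulVec_le A B C D x 0
  simp only [mulVec_zero, add_zero, toLp_zero, norm_zero] at h
  refine le_of_sq_le_sq ?_ (by positivity)
  nlinarith [sq_nonneg ‖toLp 2 (C *ᵥ x)‖]

theorem l2_opNorm_le_l2_opNorm_fromBlocks₁₂ [DecidableEq l] [DecidableEq m]
    (A : Matrix n l 𝕜) (B : Matrix n m 𝕜) (C : Matrix o l 𝕜) (D : Matrix o m 𝕜) :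
    ‖B‖ ≤ ‖fromBlocks A B C D‖ := by
  refine l2_opNorm_le_of_mulVec (norm_nonneg _) fun y => ?_
  have h := norm_sq_fromBlocks_mulVec_le A B C D 0 y
  simp only [mulVec_zero, zero_add, toLp_zero, norm_zero] at h
  refine le_of_sq_le_sq ?_ (by positivity)
  nlinarith [sq_nonneg ‖toLp 2 (D *ᵥ y)‖]

theorem l2_opNorm_add_mul_mul_le [DecidableEq m] [DecidableEq n]
    {A : Matrix m m 𝕜} {B : Matrix m n 𝕜} {C : Matrix n m 𝕜} {D : Matrix n n 𝕜}
    {S : Matrix m m 𝕜} {β s : ℝ} (hβ : 1 ≤ β) (hG : ‖fromBlocks A B C D‖ ≤ β)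
    (hS : (1 - A) * S = 1) (hSs : ‖S‖ ≤ s) :
    ‖D + C * S * B‖ ≤ β * √((β ^ 2 - 1) * s ^ 2 + 1) := by
  have hβ0 : 0 ≤ β := zero_le_one.trans hβ
  have hβ2 : 0 ≤ β ^ 2 - 1 := by nlinarith
  have hs0 : 0 ≤ s := (norm_nonneg S).trans hSs
  refine l2_opNorm_le_of_mulVec (mul_nonneg hβ0 (Real.sqrt_nonneg _)) fun y => ?_
  set x := S *ᵥ (B *ᵥ y)
  have hfix : A *ᵥ x + B *ᵥ y = x := by
    have h : (1 - A) *ᵥ x = B *ᵥ y := by rw [mulVec_mulVec, hS, one_mulVec]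
    rw [sub_mulVec, one_mulVec] at h
    rw [← h, add_sub_cancel]
  have hK : (D + C * S * B) *ᵥ y = C *ᵥ x + D *ᵥ y := by
    rw [add_mulVec, add_comm, ← mulVec_mulVec, ← mulVec_mulVec]
  have hB : ‖B‖ ≤ β := (l2_opNorm_le_l2_opNorm_fromBlocks₁₂ A B C D).trans hG
  have hx : ‖toLp 2 x‖ ≤ s * (β * ‖toLp 2 y‖) :=
    calc ‖toLp 2 x‖ ≤ ‖S‖ * ‖toLp 2 (B *ᵥ y)‖ := S.l2_opNorm_mulVec (toLp 2 (B *ᵥ y))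
      _ ≤ s * (‖B‖ * ‖toLp 2 y‖) := by gcongr; exact B.l2_opNorm_mulVec (toLp 2 y)
      _ ≤ s * (β * ‖toLp 2 y‖) := by gcongr
  have hblock := norm_sq_fromBlocks_mulVec_le A B C D x y
  rw [hfix] at hblock
  rw [hK]
  refine le_of_sq_le_sq ?_ (by positivity)
  rw [mul_pow, mul_pow, Real.sq_sqrt (by positivity)]
  calc ‖toLp 2 (C *ᵥ x + D *ᵥ y)‖ ^ 2
      ≤ (β ^ 2 - 1) * ‖toLp 2 x‖ ^ 2 + β ^ 2 * ‖toLp 2 y‖ ^ 2 := by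
        nlinarith [pow_le_pow_left₀ (norm_nonneg _) hG 2]
    _ ≤ (β ^ 2 - 1) * (s * (β * ‖toLp 2 y‖)) ^ 2 + β ^ 2 * ‖toLp 2 y‖ ^ 2 := by
        gcongr
    _ = β ^ 2 * ((β ^ 2 - 1) * s ^ 2 + 1) * ‖toLp 2 y‖ ^ 2 := by ring

end Matrix

/-- If `G = [G₁₁ G₁₂; G₂₁ G₂₂]` satisfies `‖G‖ ≤ β` with `β > 1` and `G₁₁` is
nilpotent with `G₁₁ ^ κ = 0`, then `K = G₂₂ + G₂₁ (I - G₁₁)⁻¹ G₁₂` satisfies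
`‖K‖ ≤ β √((β² - 1)(1 + β + ⋯ + β^(κ-1))² + 1)`. -/
theorem closed_loop_norm_bound {m n : ℕ} (β : ℝ) (κ : ℕ)
    (G11 : Matrix (Fin m) (Fin m) ℂ) (G12 : Matrix (Fin m) (Fin n) ℂ)
    (G21 : Matrix (Fin n) (Fin m) ℂ) (G22 : Matrix (Fin n) (Fin n) ℂ)
    (hβ : 1 < β)
    (hG : ‖Matrix.fromBlocks G11 G12 G21 G22‖ ≤ β)
    (hnil : G11 ^ κ = 0) :
    ‖G22 + G21 * (1 - G11)⁻¹ * G12‖ ≤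
      β * Real.sqrt ((β ^ 2 - 1) * (∑ i ∈ Finset.range κ, β ^ i) ^ 2 + 1) := by
  have hinv := one_sub_mul_geom_sum_of_pow_eq_zero hnil
  rw [Matrix.inv_eq_right_inv hinv]
  have hG11 : ‖G11‖ ≤ β := (l2_opNorm_le_l2_opNorm_fromBlocks₁₁ G11 G12 G21 G22).trans hG
  exact l2_opNorm_add_mul_mul_le hβ.le hG hinv
    (norm_geom_sum_le_of_norm_le l2_opNorm_one_le hG11 κ)
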